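/- arXiv:1904.11802 — 2 statements merged into one kernel-verified Lean document; each statement's English description precedes it below -/
import Mathlib

section
/- Let S be an inverse submonoid of I∞⇗(ℕ) containing the bicyclic submonoid C_ℕ. Define the relation α ∼ β iff there exists an idempotent e ∈ S with α e = β e (the least group congruence). Then α ∼ β if and only if α and β have the same eventual translation constant, i.e., α(n) − n = β(n) − n for all sufficiently large n; consequently the quotient S/∼ is isomorphic to the additive group of integers ℤ. -/
/-- Composition of partial selfmaps of ℕ: apply `f` first, then `g`. -/
def PComp (f g : ℕ → Option ℕ) : ℕ → Option ℕ := fun n => (f n).bind g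

/-- The identity partial map on ℕ. -/
def pid : ℕ → Option ℕ := fun n => some n

/-- `f` is injective where defined (a partial bijection). -/
def PInj (f : ℕ → Option ℕ) : Prop := ∀ a b c, f a = some c → f b = some c → a = b

/-- Domain of a partial map. -/
def pdom (f : ℕ → Option ℕ) : Set ℕ := {n | f n ≠ none}

/-- Range of a partial map. -/
def pran (f : ℕ → Option ℕ) : Set ℕ := {m | ∃ n, f n = some m}

/-- `g` is the inverse partial map of `f`. -/
def PInv (f g : ℕ → Option ℕ) : Prop := ∀ a b, f a = some b ↔ g b = some a

/-- Domain and range are cofinite. -/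
def PCofinite (f : ℕ → Option ℕ) : Prop := (pdom f)ᶜ.Finite ∧ (pran f)ᶜ.Finite

/-- `f` is strictly increasing on its domain. -/
def PMono (f : ℕ → Option ℕ) : Prop :=
  ∀ a b c d, f a = some c → f b = some d → a < b → c < d

/-- The monoid `I∞↗(ℕ)`: cofinite monotone injective partial selfmaps of ℕ. -/
def InIoo (f : ℕ → Option ℕ) : Prop := PInj f ∧ PCofinite f ∧ PMono f

/-- The monoid `I∞⇗(ℕ)`: cofinite almost monotone injective partial selfmaps of ℕ. -/
def IAlmost (f : ℕ → Option ℕ) : Prop :=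
  PInj f ∧ PCofinite f ∧ ∃ A : Set ℕ, A.Finite ∧
    ∀ a b c d, a ∉ A → b ∉ A → f a = some c → f b = some d → a < b → c < d

/-- The monoid `Iℕ∞`: cofinite partial isometries of ℕ. -/
def Isom (f : ℕ → Option ℕ) : Prop :=
  PInj f ∧ PCofinite f ∧ ∀ a b c d, f a = some c → f b = some d →
    |(c : ℤ) - (d : ℤ)| = |(a : ℤ) - (b : ℤ)|

/-- The shift `n ↦ n + 1`, defined everywhere. -/
def alphaShift : ℕ → Option ℕ := fun n => some (n + 1)

/-- The inverse partial shift `n ↦ n - 1`, undefined at the least element of ℕ. -/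
def betaShift : ℕ → Option ℕ := fun n => if n = 0 then none else some (n - 1)

/-- Iterated composition power of a partial map. -/
def PPow (f : ℕ → Option ℕ) : ℕ → ℕ → Option ℕ
  | 0 => pid
  | n + 1 => PComp (PPow f n) f

/-!
Beyond a finite set, an element `f` of `I∞⇗(ℕ)` is defined and strictly increasing, so
`n ↦ f n - n` is eventually nondecreasing; since the range of `f` is cofinite it is also bounded,
hence eventually equal to a constant `k_f`. This constant is additive under composition, and an
idempotent is a partial identity with cofinite domain, so `k_e = 0` and `f e = g e` forces
`k_f = k_g`. Conversely, if `k_f = k_g` then `f` and `g` agree beyond some `N`, and the idempotent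
`β^M α^M`, the identity of `[M, ∞)`, equalises them once `M` exceeds their values on `[0, N)`.
The powers of the shifts realise every `k ∈ ℤ`.
-/

open Filter

def EventuallyTranslatesBy (f : ℕ → Option ℕ) (k : ℤ) : Prop :=
  ∀ᶠ n in atTop, ∃ c, f n = some c ∧ (c : ℤ) = n + k

namespace EventuallyTranslatesBy

variable {a b e : ℕ → Option ℕ} {k ka kb : ℤ}

theorem unique (ha : EventuallyTranslatesBy a ka) (hb : EventuallyTranslatesBy a kb) :
    ka = kb := by
  obtain ⟨n, ⟨c, hc, hck⟩, ⟨d, hd, hdk⟩⟩ := (ha.and hb).exists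
  obtain rfl : c = d := Option.some_injective _ (hc.symm.trans hd)
  omega

theorem pComp (ha : EventuallyTranslatesBy a ka) (hb : EventuallyTranslatesBy b kb) :
    EventuallyTranslatesBy (PComp a b) (ka + kb) := by
  obtain ⟨N, hN⟩ := eventually_atTop.1 hb
  filter_upwards [ha, eventually_ge_atTop (N + ka.natAbs)] with n ⟨c, hc, hck⟩ hn
  obtain ⟨d, hd, hdk⟩ := hN c (by omega)
  exact ⟨d, by simp [PComp, hc, hd], by omega⟩

theorem eq_of_pComp_eq (ha : EventuallyTranslatesBy a ka) (hb : EventuallyTranslatesBy b kb)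
    (he : EventuallyTranslatesBy e 0) (h : PComp a e = PComp b e) : ka = kb := by
  have hae := ha.pComp he
  rw [h] at hae
  simpa using hae.unique (hb.pComp he)

theorem eventually_eq (ha : EventuallyTranslatesBy a k) (hb : EventuallyTranslatesBy b k) :
    ∀ᶠ n in atTop, a n = b n := by
  filter_upwards [ha, hb] with n ⟨c, hc, hck⟩ ⟨d, hd, hdk⟩
  rw [hc, hd, show c = d by omega]

end EventuallyTranslatesBy

theorem Int.exists_eventually_eq_of_monotoneOn {d : ℕ → ℤ} {N : ℕ} {B : ℤ}
    (hd : MonotoneOn d {n | N ≤ n}) (hB : ∀ n ≥ N, d n ≤ B) :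
    ∃ k, ∀ᶠ n in atTop, d n = k := by
  obtain ⟨k, ⟨n₀, hn₀, rfl⟩, hmax⟩ :=
    Int.exists_greatest_of_bdd (P := fun z => ∃ n ≥ N, d n = z)
      ⟨B, fun _ ⟨n, hn, hz⟩ => hz ▸ hB n hn⟩ ⟨d N, N, le_rfl, rfl⟩
  refine ⟨d n₀, ?_⟩
  filter_upwards [eventually_ge_atTop n₀] with n hn
  exact le_antisymm (hmax _ ⟨n, hn₀.trans hn, rfl⟩) (hd hn₀ (hn₀.trans hn) hn)

/-- `[0, c]` is covered by the values of `f` on `[0, n]` and the complement of its range. -/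
theorem le_add_card_compl_pran {f : ℕ → Option ℕ} (hran : (pran f)ᶜ.Finite) {n c : ℕ}
    (h : ∀ m c', f m = some c' → c' ≤ c → m ≤ n) :
    c ≤ n + hran.toFinset.card := by
  classical
  have hsub : Finset.range (c + 1) ⊆
      (Finset.range (n + 1)).image (fun m => (f m).getD 0) ∪ hran.toFinset := by
    intro c' hc'
    by_cases hmem : c' ∈ pran f
    · obtain ⟨m, hm⟩ := hmem
      refine Finset.mem_union_left _ (Finset.mem_image.2 ⟨m, ?_, by simp [hm]⟩)
      exact Finset.mem_range_succ_iff.2 (h m c' hm (Finset.mem_range_succ_iff.1 hc'))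
    · exact Finset.mem_union_right _ (hran.mem_toFinset.2 hmem)
  have := (Finset.card_le_card hsub).trans (Finset.card_union_le _ _)
  have := Finset.card_image_le (s := Finset.range (n + 1)) (f := fun m => (f m).getD 0)
  simp only [Finset.card_range] at *
  omega

theorem IAlmost.exists_eventuallyTranslatesBy {f : ℕ → Option ℕ} (hf : IAlmost f) :
    ∃ k, EventuallyTranslatesBy f k := by
  obtain ⟨-, ⟨hdom, hran⟩, A, hA, hmono⟩ := hf
  obtain ⟨N, hN⟩ := (hA.union hdom).bddAbove
  set g : ℕ → ℕ := fun n => (f n).getD 0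
  have hfg : ∀ n, N < n → f n = some (g n) := by
    intro n hn
    obtain ⟨c, hc⟩ := Option.ne_none_iff_exists'.1
      fun h => (hn.trans_le (hN (Or.inr (not_not.2 h)))).false
    simp [g, hc]
  have hA_lt : ∀ n ∈ A, n ≤ N := fun n hn => hN (Or.inl hn)
  have hg_lt : ∀ m n, N < m → m < n → g m < g n := fun m n hm hmn =>
    hmono m n _ _ (fun h => absurd hm (hA_lt m h).not_gt)
      (fun h => absurd (hm.trans hmn) (hA_lt n h).not_gt) (hfg m hm) (hfg n (hm.trans hmn)) hmn
  have hg_le : ∀ n, N < n → g n ≤ n + hran.toFinset.card := by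
    refine fun n hn => le_add_card_compl_pran hran fun m c' hm hc' => ?_
    by_contra! hnm
    have := hg_lt n m hn hnm
    rw [hfg m (hn.trans hnm), Option.some_inj] at hm
    omega
  obtain ⟨k, hk⟩ := Int.exists_eventually_eq_of_monotoneOn (d := fun n => (g n : ℤ) - n)
    (N := N + 1) (B := hran.toFinset.card)
    (monotoneOn_nat_Ici_of_le_succ fun n hn => by have := hg_lt n (n + 1) hn n.lt_add_one; omega)
    (fun n hn => by have := hg_le n hn; omega)
  refine ⟨k, ?_⟩
  filter_upwards [hk, eventually_gt_atTop N] with n hnk hn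
  exact ⟨g n, hfg n hn, by omega⟩

theorem eventuallyTranslatesBy_zero_of_idempotent {e : ℕ → Option ℕ} (hinj : PInj e)
    (hdom : (pdom e)ᶜ.Finite) (hee : PComp e e = e) : EventuallyTranslatesBy e 0 := by
  have hdom' : pdom e ∈ atTop := Nat.cofinite_eq_atTop ▸ mem_cofinite.2 hdom
  filter_upwards [hdom'] with n hn
  obtain ⟨c, hc⟩ := Option.ne_none_iff_exists'.1 hn
  have hcc : e c = some c := by simpa [PComp, hc] using congrFun hee n
  exact ⟨c, hc, by rw [hinj c n c hcc hc]; simp⟩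

open Classical in
/-- The eventual translation constant `k_α`, with junk value `0` where there is none. -/
noncomputable def translationConst (f : ℕ → Option ℕ) : ℤ :=
  if h : ∃ k, EventuallyTranslatesBy f k then h.choose else 0

theorem EventuallyTranslatesBy.translationConst_eq {f : ℕ → Option ℕ} {k : ℤ}
    (h : EventuallyTranslatesBy f k) : translationConst f = k := by
  have he : ∃ k, EventuallyTranslatesBy f k := ⟨k, h⟩
  rw [translationConst, dif_pos he]
  exact he.choose_spec.unique h

theorem IAlmost.eventuallyTranslatesBy_translationConst {f : ℕ → Option ℕ} (hf : IAlmost f) :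
    EventuallyTranslatesBy f (translationConst f) := by
  obtain ⟨k, hk⟩ := hf.exists_eventuallyTranslatesBy
  exact hk.translationConst_eq ▸ hk

theorem pPow_alphaShift_apply (m n : ℕ) : PPow alphaShift m n = some (n + m) := by
  induction m with
  | zero => rfl
  | succ m ih => simp [PPow, PComp, ih, alphaShift, Nat.add_assoc]

theorem pPow_betaShift_apply (m n : ℕ) :
    PPow betaShift m n = if m ≤ n then some (n - m) else none := by
  induction m with
  | zero => rfl
  | succ m ih =>
    simp only [PPow, PComp, ih]
    by_cases h : m ≤ n <;> by_cases h' : m + 1 ≤ n <;> simp [h, h', betaShift] <;> omega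

theorem eventuallyTranslatesBy_pPow_alphaShift (m : ℕ) :
    EventuallyTranslatesBy (PPow alphaShift m) m :=
  Eventually.of_forall fun n => ⟨n + m, pPow_alphaShift_apply m n, by push_cast; rfl⟩

theorem eventuallyTranslatesBy_pPow_betaShift (m : ℕ) :
    EventuallyTranslatesBy (PPow betaShift m) (-m) := by
  filter_upwards [eventually_ge_atTop m] with n hn
  exact ⟨n - m, by simp [pPow_betaShift_apply, hn], by omega⟩

def pidFrom (M : ℕ) : ℕ → Option ℕ := fun n => if M ≤ n then some n else none

theorem pComp_pPow_betaShift_alphaShift (M : ℕ) :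
    PComp (PPow betaShift M) (PPow alphaShift M) = pidFrom M := by
  funext n
  simp only [PComp, pPow_betaShift_apply, pPow_alphaShift_apply, pidFrom]
  split_ifs with h
  · simp [Nat.sub_add_cancel h]
  · rfl

theorem pComp_pidFrom_self (M : ℕ) : PComp (pidFrom M) (pidFrom M) = pidFrom M := by
  funext n
  by_cases h : M ≤ n <;> simp [PComp, pidFrom, h]

theorem exists_pComp_pidFrom_eq {a b : ℕ → Option ℕ} (h : ∀ᶠ n in atTop, a n = b n) :
    ∃ M, PComp a (pidFrom M) = PComp b (pidFrom M) := by
  obtain ⟨N, hN⟩ := eventually_atTop.1 h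
  set M := (Finset.range N).sup (fun n => max ((a n).getD 0) ((b n).getD 0)) + 1
  have hlt : ∀ f ∈ ({a, b} : Set (ℕ → Option ℕ)), ∀ n < N,
      PComp f (pidFrom M) n = none := by
    intro f hf n hn
    have hsup := Finset.le_sup (f := fun n => max ((a n).getD 0) ((b n).getD 0))
      (Finset.mem_range.2 hn)
    cases hfn : f n with
    | none => simp [PComp, hfn]
    | some c =>
      have : c < M := by rcases hf with rfl | rfl <;> simp [hfn] at hsup <;> omega
      simp [PComp, hfn, pidFrom, this]
  refine ⟨M, funext fun n => ?_⟩
  rcases lt_or_ge n N with hn | hn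
  · rw [hlt a (by simp) n hn, hlt b (by simp) n hn]
  · simp [PComp, hN n hn]

theorem pPow_mem {S : Set (ℕ → Option ℕ)} (hid : pid ∈ S)
    (hmul : ∀ f ∈ S, ∀ g ∈ S, PComp f g ∈ S) {f : ℕ → Option ℕ} (hf : f ∈ S) (m : ℕ) :
    PPow f m ∈ S := by
  induction m with
  | zero => exact hid
  | succ m ih => exact hmul _ ih _ hf

theorem pidFrom_mem {S : Set (ℕ → Option ℕ)} (hid : pid ∈ S)
    (hmul : ∀ f ∈ S, ∀ g ∈ S, PComp f g ∈ S) (hα : alphaShift ∈ S) (hβ : betaShift ∈ S)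
    (M : ℕ) : pidFrom M ∈ S :=
  pComp_pPow_betaShift_alphaShift M ▸
    hmul _ (pPow_mem hid hmul hβ M) _ (pPow_mem hid hmul hα M)

theorem stmt14_general (S : Set (ℕ → Option ℕ))
    (hsub : ∀ f ∈ S, IAlmost f) (hid : pid ∈ S)
    (hmul : ∀ f ∈ S, ∀ g ∈ S, PComp f g ∈ S)
    (hα : alphaShift ∈ S) (hβ : betaShift ∈ S) :
    (∀ a ∈ S, ∀ b ∈ S,
      ((∃ e ∈ S, PComp e e = e ∧ PComp a e = PComp b e) ↔
        ∃ k : ℤ, ∃ N : ℕ, ∀ n ≥ N,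
          (∃ c, a n = some c ∧ (c : ℤ) = (n : ℤ) + k) ∧
          (∃ c, b n = some c ∧ (c : ℤ) = (n : ℤ) + k))) ∧
    ∃ F : (ℕ → Option ℕ) → ℤ,
      (∀ a ∈ S, ∀ b ∈ S, F (PComp a b) = F a + F b) ∧
      (∀ a ∈ S, ∀ b ∈ S,
        ((∃ e ∈ S, PComp e e = e ∧ PComp a e = PComp b e) ↔ F a = F b)) ∧
      (∀ k : ℤ, ∃ a ∈ S, F a = k) := by
  have hT f (hf : f ∈ S) := (hsub f hf).eventuallyTranslatesBy_translationConst
  have hsim : ∀ a ∈ S, ∀ b ∈ S, (∃ e ∈ S, PComp e e = e ∧ PComp a e = PComp b e) ↔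
      translationConst a = translationConst b := by
    refine fun a ha b hb => ⟨fun ⟨e, he, hee, hab⟩ => ?_, fun h => ?_⟩
    · have he0 := eventuallyTranslatesBy_zero_of_idempotent (hsub e he).1 (hsub e he).2.1.1 hee
      exact (hT a ha).eq_of_pComp_eq (hT b hb) he0 hab
    · obtain ⟨M, hM⟩ := exists_pComp_pidFrom_eq ((hT a ha).eventually_eq (h ▸ hT b hb))
      exact ⟨pidFrom M, pidFrom_mem hid hmul hα hβ M, pComp_pidFrom_self M, hM⟩
  refine ⟨fun a ha b hb => ?_, translationConst,
    fun a ha b hb => ((hT a ha).pComp (hT b hb)).translationConst_eq, hsim, fun k => ?_⟩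
  · rw [hsim a ha b hb]
    refine ⟨fun h => ⟨_, eventually_atTop.1 ((hT a ha).and (h ▸ hT b hb))⟩, ?_⟩
    rintro ⟨k, hk⟩
    have hab : ∀ᶠ n in atTop, _ ∧ _ := eventually_atTop.2 hk
    rw [EventuallyTranslatesBy.translationConst_eq (hab.mono fun _ => And.left),
      EventuallyTranslatesBy.translationConst_eq (hab.mono fun _ => And.right)]
  · obtain ⟨m, rfl | rfl⟩ := Int.eq_nat_or_neg k
    · exact ⟨_, pPow_mem hid hmul hα m,
        (eventuallyTranslatesBy_pPow_alphaShift m).translationConst_eq⟩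
    · exact ⟨_, pPow_mem hid hmul hβ m,
        (eventuallyTranslatesBy_pPow_betaShift m).translationConst_eq⟩

/-- For an inverse submonoid `S` of `I∞⇗(ℕ)` containing `C_ℕ`, the least group
congruence `α ∼ β ⇔ αe = βe` for some idempotent `e ∈ S` holds iff `α` and `β` have
the same eventual translation constant; consequently `S/∼` is isomorphic to `ℤ(+)`. -/
theorem stmt14 (S : Set (ℕ → Option ℕ))
    (hsub : ∀ f ∈ S, IAlmost f) (hid : pid ∈ S)
    (hmul : ∀ f ∈ S, ∀ g ∈ S, PComp f g ∈ S)
    (hinv : ∀ f ∈ S, ∃ g ∈ S, PInv f g)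
    (hα : alphaShift ∈ S) (hβ : betaShift ∈ S) :
    (∀ a ∈ S, ∀ b ∈ S,
      ((∃ e ∈ S, PComp e e = e ∧ PComp a e = PComp b e) ↔
        ∃ k : ℤ, ∃ N : ℕ, ∀ n ≥ N,
          (∃ c, a n = some c ∧ (c : ℤ) = (n : ℤ) + k) ∧
          (∃ c, b n = some c ∧ (c : ℤ) = (n : ℤ) + k))) ∧
    ∃ F : (ℕ → Option ℕ) → ℤ,
      (∀ a ∈ S, ∀ b ∈ S, F (PComp a b) = F a + F b) ∧
      (∀ a ∈ S, ∀ b ∈ S,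
        ((∃ e ∈ S, PComp e e = e ∧ PComp a e = PComp b e) ↔ F a = F b)) ∧
      (∀ k : ℤ, ∃ a ∈ S, F a = k) :=
  stmt14_general S hsub hid hmul hα hβ
end

section
/- The minimum group congruence quotient of the semigroup Iℕ∞ of cofinite partial isometries of ℕ is isomorphic to ℤ(+): two cofinite partial isometries α, β of ℕ satisfy αe = βe for some idempotent e if and only if α and β eventually agree and act as the same translation n ↦ n + k. -/
open Filter

def EventuallyTranslates (a : ℕ → Option ℕ) (k : ℤ) : Prop :=
  ∀ᶠ n in atTop, ∃ c, a n = some c ∧ (c : ℤ) = n + k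

lemma finite_compl_iff_eventually_mem {s : Set ℕ} : sᶜ.Finite ↔ ∀ᶠ n in atTop, n ∈ s := by
  rw [← Nat.cofinite_eq_atTop]
  exact mem_cofinite.symm

lemma eventually_defined_of_finite_compl_pdom {a : ℕ → Option ℕ} (h : (pdom a)ᶜ.Finite) :
    ∀ᶠ n in atTop, ∃ c, a n = some c :=
  (finite_compl_iff_eventually_mem.1 h).mono fun _ hn => Option.ne_none_iff_exists'.1 hn

lemma Isom.exists_eventuallyTranslates {a : ℕ → Option ℕ} (ha : Isom a) :
    ∃ k, EventuallyTranslates a k := by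
  obtain ⟨N, hN⟩ := eventually_atTop.1 (eventually_defined_of_finite_compl_pdom ha.2.1.1)
  obtain ⟨p, hp⟩ := hN N le_rfl
  refine ⟨p - N, eventually_atTop.2 ⟨N, fun n hn => ?_⟩⟩
  obtain ⟨u, hu⟩ := hN n hn
  -- For `m = N + p + n + 1`, `a m` is at distance `m - N > p` from `a N = p`, so lies above `p`;
  -- then `|a m - a n| = m - n` forces `a n` to lie above `p` as well.
  obtain ⟨w, hw⟩ := hN (N + p + n + 1) (by omega)
  have hnN := ha.2.2 _ _ _ _ hu hp
  have hmN := ha.2.2 _ _ _ _ hw hp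
  have hmn := ha.2.2 _ _ _ _ hw hu
  refine ⟨u, hu, ?_⟩
  push_cast at hnN hmN hmn
  simp only [abs_eq_max_neg] at hnN hmN hmn
  omega

namespace EventuallyTranslates

variable {a b : ℕ → Option ℕ} {k l : ℤ}

lemma unique (ha : EventuallyTranslates a k) (ha' : EventuallyTranslates a l) : k = l := by
  obtain ⟨n, ⟨c, hc, hck⟩, ⟨d, hd, hdl⟩⟩ := (ha.and ha').exists
  rw [hc, Option.some_inj] at hd
  omega

lemma pcomp (ha : EventuallyTranslates a k) (hb : EventuallyTranslates b l) :
    EventuallyTranslates (PComp a b) (k + l) := by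
  obtain ⟨N, hN⟩ := eventually_atTop.1 hb
  filter_upwards [ha, eventually_ge_atTop (N + k.natAbs)] with n ⟨c, hc, hck⟩ hn
  obtain ⟨d, hd, hdl⟩ := hN c (by omega)
  exact ⟨d, by simp only [PComp, hc, Option.bind_some, hd], by omega⟩

lemma eventuallyEq (ha : EventuallyTranslates a k) (hb : EventuallyTranslates b k) :
    a =ᶠ[atTop] b := by
  filter_upwards [ha, hb] with n ⟨c, hc, hck⟩ ⟨d, hd, hdk⟩
  rw [hc, hd, Option.some_inj]
  omega

end EventuallyTranslates

lemma eq_of_pcomp_self_eq_self {e : ℕ → Option ℕ} (he : PInj e) (hee : PComp e e = e) {n m : ℕ}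
    (hn : e n = some m) : m = n := by
  have hm : e m = some m := by simpa only [PComp, hn, Option.bind_some] using congrFun hee n
  exact he m n m hm hn

lemma eventuallyTranslates_zero_of_pcomp_self_eq_self {e : ℕ → Option ℕ} (he : Isom e)
    (hee : PComp e e = e) : EventuallyTranslates e 0 := by
  filter_upwards [eventually_defined_of_finite_compl_pdom he.2.1.1] with n ⟨c, hc⟩
  exact ⟨c, hc, by rw [eq_of_pcomp_self_eq_self he.1 hee hc, add_zero]⟩

def idIci (M : ℕ) : ℕ → Option ℕ := fun n => if M ≤ n then some n else none

lemma idIci_eq_some {M n c : ℕ} : idIci M n = some c ↔ M ≤ n ∧ n = c := by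
  simp only [idIci, Option.ite_none_right_eq_some, Option.some_inj]

lemma isom_idIci (M : ℕ) : Isom (idIci M) := by
  have hdom : ∀ᶠ n in atTop, idIci M n = some n :=
    (eventually_ge_atTop M).mono fun n hn => idIci_eq_some.2 ⟨hn, rfl⟩
  refine ⟨fun x y c hx hy => ?_, ⟨?_, ?_⟩, fun x y c d hx hy => ?_⟩
  · rw [idIci_eq_some] at hx hy
    omega
  · exact finite_compl_iff_eventually_mem.2
      (hdom.mono fun n hn => Option.ne_none_iff_exists'.2 ⟨n, hn⟩)
  · exact finite_compl_iff_eventually_mem.2 (hdom.mono fun n hn => ⟨n, hn⟩)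
  · rw [idIci_eq_some] at hx hy
    rw [hx.2, hy.2]

lemma pcomp_idIci_self (M : ℕ) : PComp (idIci M) (idIci M) = idIci M := by
  funext n
  by_cases hn : M ≤ n <;> simp [PComp, idIci, hn]

lemma exists_values_lt (a : ℕ → Option ℕ) (N : ℕ) :
    ∃ M, ∀ n < N, ∀ c, a n = some c → c < M := by
  have hfin : {c | ∃ n < N, a n = some c}.Finite :=
    ((Set.finite_Iio N).image fun n => (a n).getD 0).subset fun c ⟨n, hn, hc⟩ =>
      ⟨n, hn, by simp [hc]⟩
  obtain ⟨M, hM⟩ := hfin.bddAbove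
  exact ⟨M + 1, fun n hn c hc => Nat.lt_succ_of_le (hM ⟨n, hn, hc⟩)⟩

lemma pcomp_idIci_eq_none {f : ℕ → Option ℕ} {M n : ℕ} (h : ∀ c, f n = some c → c < M) :
    PComp f (idIci M) n = none := by
  cases hfn : f n with
  | none => simp [PComp, hfn]
  | some c => simp [PComp, hfn, idIci, h c hfn]

lemma exists_pcomp_idIci_eq_of_eventuallyEq {a b : ℕ → Option ℕ} (h : a =ᶠ[atTop] b) :
    ∃ M, PComp a (idIci M) = PComp b (idIci M) := by
  obtain ⟨N, hN⟩ := eventually_atTop.1 h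
  obtain ⟨Ma, hMa⟩ := exists_values_lt a N
  obtain ⟨Mb, hMb⟩ := exists_values_lt b N
  refine ⟨max Ma Mb, funext fun n => ?_⟩
  rcases lt_or_ge n N with hn | hn
  · rw [pcomp_idIci_eq_none fun c hc => (hMa n hn c hc).trans_le (le_max_left _ _),
      pcomp_idIci_eq_none fun c hc => (hMb n hn c hc).trans_le (le_max_right _ _)]
  · simp only [PComp, hN n hn]

lemma exists_idempotent_pcomp_eq_iff {a b : ℕ → Option ℕ} (ha : Isom a) (hb : Isom b) :
    (∃ e, Isom e ∧ PComp e e = e ∧ PComp a e = PComp b e) ↔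
      ∃ k, EventuallyTranslates a k ∧ EventuallyTranslates b k := by
  constructor
  · rintro ⟨e, he, hee, hab⟩
    obtain ⟨k, hak⟩ := ha.exists_eventuallyTranslates
    obtain ⟨l, hbl⟩ := hb.exists_eventuallyTranslates
    have he0 := eventuallyTranslates_zero_of_pcomp_self_eq_self he hee
    have hae := hak.pcomp he0
    rw [hab] at hae
    obtain rfl : k = l := by simpa only [add_zero] using hae.unique (hbl.pcomp he0)
    exact ⟨k, hak, hbl⟩
  · rintro ⟨k, hak, hbk⟩
    obtain ⟨M, hM⟩ := exists_pcomp_idIci_eq_of_eventuallyEq (hak.eventuallyEq hbk)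
    exact ⟨idIci M, isom_idIci M, pcomp_idIci_self M, hM⟩

open Classical in
noncomputable def translationNumber (a : ℕ → Option ℕ) : ℤ :=
  if h : ∃ k, EventuallyTranslates a k then h.choose else 0

lemma EventuallyTranslates.translationNumber_eq {a : ℕ → Option ℕ} {k : ℤ}
    (h : EventuallyTranslates a k) : translationNumber a = k := by
  have hex : ∃ k, EventuallyTranslates a k := ⟨k, h⟩
  rw [translationNumber, dif_pos hex]
  exact hex.choose_spec.unique h

lemma Isom.eventuallyTranslates_translationNumber {a : ℕ → Option ℕ} (ha : Isom a) :
    EventuallyTranslates a (translationNumber a) := by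
  obtain ⟨k, hk⟩ := ha.exists_eventuallyTranslates
  rwa [hk.translationNumber_eq]

lemma Isom.translationNumber_pcomp {a b : ℕ → Option ℕ} (ha : Isom a) (hb : Isom b) :
    translationNumber (PComp a b) = translationNumber a + translationNumber b :=
  (ha.eventuallyTranslates_translationNumber.pcomp
    hb.eventuallyTranslates_translationNumber).translationNumber_eq

lemma exists_idempotent_pcomp_eq_iff_translationNumber_eq {a b : ℕ → Option ℕ} (ha : Isom a)
    (hb : Isom b) : (∃ e, Isom e ∧ PComp e e = e ∧ PComp a e = PComp b e) ↔
      translationNumber a = translationNumber b := by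
  rw [exists_idempotent_pcomp_eq_iff ha hb]
  constructor
  · rintro ⟨k, hak, hbk⟩
    rw [hak.translationNumber_eq, hbk.translationNumber_eq]
  · intro h
    exact ⟨_, ha.eventuallyTranslates_translationNumber,
      h ▸ hb.eventuallyTranslates_translationNumber⟩

def shiftBy (k : ℤ) : ℕ → Option ℕ := fun n => if 0 ≤ (n : ℤ) + k then some (n + k).toNat else none

lemma shiftBy_eq_some {k : ℤ} {n c : ℕ} : shiftBy k n = some c ↔ (c : ℤ) = n + k := by
  simp only [shiftBy, Option.ite_none_right_eq_some, Option.some_inj]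
  omega

lemma eventuallyTranslates_shiftBy (k : ℤ) : EventuallyTranslates (shiftBy k) k :=
  (eventually_ge_atTop k.natAbs).mono fun n hn => ⟨(n + k).toNat, shiftBy_eq_some.2 (by omega),
    by omega⟩

lemma isom_shiftBy (k : ℤ) : Isom (shiftBy k) := by
  refine ⟨fun x y c hx hy => ?_, ⟨?_, ?_⟩, fun x y c d hx hy => ?_⟩
  · rw [shiftBy_eq_some] at hx hy
    omega
  · exact finite_compl_iff_eventually_mem.2 ((eventuallyTranslates_shiftBy k).mono
      fun _ ⟨c, hc, _⟩ => Option.ne_none_iff_exists'.2 ⟨c, hc⟩)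
  · refine finite_compl_iff_eventually_mem.2 ((eventually_ge_atTop k.toNat).mono fun c hc => ?_)
    exact ⟨(c - k).toNat, shiftBy_eq_some.2 (by omega)⟩
  · rw [shiftBy_eq_some] at hx hy
    congr 1
    omega

/-- The minimum group congruence quotient of `Iℕ∞` is isomorphic to `ℤ(+)`:
two cofinite partial isometries satisfy `αe = βe` for some idempotent `e` iff they
eventually agree and act as the same translation `n ↦ n + k`. -/
theorem stmt15 :
    (∀ a b : ℕ → Option ℕ, Isom a → Isom b →
      ((∃ e, Isom e ∧ PComp e e = e ∧ PComp a e = PComp b e) ↔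
        ∃ k : ℤ, ∃ N : ℕ, ∀ n ≥ N,
          (∃ c, a n = some c ∧ (c : ℤ) = (n : ℤ) + k) ∧
          (∃ c, b n = some c ∧ (c : ℤ) = (n : ℤ) + k))) ∧
    ∃ F : (ℕ → Option ℕ) → ℤ,
      (∀ a b, Isom a → Isom b → F (PComp a b) = F a + F b) ∧
      (∀ a b, Isom a → Isom b →
        ((∃ e, Isom e ∧ PComp e e = e ∧ PComp a e = PComp b e) ↔ F a = F b)) ∧
      (∀ k : ℤ, ∃ a, Isom a ∧ F a = k) := by
  refine ⟨fun a b ha hb => ?_, translationNumber, fun a b ha hb => ha.translationNumber_pcomp hb,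
    fun a b ha hb => exists_idempotent_pcomp_eq_iff_translationNumber_eq ha hb,
    fun k => ⟨shiftBy k, isom_shiftBy k, (eventuallyTranslates_shiftBy k).translationNumber_eq⟩⟩
  rw [exists_idempotent_pcomp_eq_iff ha hb]
  refine exists_congr fun k => ?_
  rw [EventuallyTranslates, EventuallyTranslates, ← eventually_and, eventually_atTop]
end
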